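/- Let B = ℂ[u, v, w, s, t] be the polynomial ring in five variables and set ℓ₁ = uw + s², ℓ₂ = ut − vs, ℓ₃ = vw + st. Then the colon ideal ⟨ℓ₁, ℓ₂, ℓ₃⟩ : ⟨u⟩ equals ⟨ℓ₁, ℓ₂, ℓ₃⟩; equivalently, the image of u in the quotient ring B/⟨ℓ₁, ℓ₂, ℓ₃⟩ is not a zero divisor. -/

import Mathlib

open MvPolynomial

/-
Write `u, v, w, s, t` for `X 0, …, X 4` and suppose `u f = a ℓ₁ + b ℓ₂ + c ℓ₃`. Setting `u = 0`
turns this into a syzygy `a₀ s² − b₀ vs + c₀ (vw + st) = 0` in `v, w, s, t`. Since `s` is prime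
and divides neither `v` nor `w`, every such syzygy is a combination `p (v, s, 0) + q (−t, w, s)`.
Both lift to syzygies with `u`: `v ℓ₁ + s ℓ₂ − u ℓ₃ = 0` and `−t ℓ₁ + w ℓ₂ + s ℓ₃ = 0`. Writing
`(a, b, c) = p (v, s, 0) + q (−t, w, s) + u (a', b', c')` therefore gives
`u f = u (a' ℓ₁ + b' ℓ₂ + (c' + p) ℓ₃)`, and `u` cancels.
-/

theorem exists_eq_of_syzygy {A : Type*} [CommRing A] [IsDomain A] {v w s t a b c : A}
    (hs : Prime s) (hv : ¬ s ∣ v) (hw : ¬ s ∣ w)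
    (h : a * s ^ 2 - b * (v * s) + c * (v * w + s * t) = 0) :
    ∃ p q, a = v * p - t * q ∧ b = s * p + w * q ∧ c = s * q := by
  obtain ⟨q, rfl⟩ : s ∣ c := by
    have : s ∣ c * (v * w) := ⟨b * v - a * s - c * t, by linear_combination h⟩
    exact ((hs.dvd_or_dvd this).resolve_right fun hvw ↦
      (hs.dvd_or_dvd hvw).elim hv hw)
  have h' : s * (a + q * t) = v * (b - q * w) :=
    mul_left_cancel₀ hs.ne_zero (by linear_combination h)
  obtain ⟨p, hp⟩ : s ∣ b - q * w :=
    (hs.dvd_or_dvd ⟨a + q * t, h'.symm⟩).resolve_left hv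
  refine ⟨p, q, ?_, by linear_combination hp, by ring⟩
  have : s * (a + q * t) = s * (v * p) := by rw [h', hp]; ring
  linear_combination mul_left_cancel₀ hs.ne_zero this

theorem X_dvd_sub_aeval_update_zero {σ R : Type*} [CommRing R] [DecidableEq σ] (i : σ)
    (p : MvPolynomial σ R) : X i ∣ p - aeval (Function.update X i 0) p := by
  induction p using MvPolynomial.induction_on with
  | C r => simp
  | add p q hp hq => simpa only [map_add, add_sub_add_comm] using dvd_add hp hq
  | mul_X p j hp =>
    rcases eq_or_ne j i with rfl | hj
    · simp
    · rw [map_mul, aeval_X, Function.update_of_ne hj, ← sub_mul]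
      exact hp.mul_right (X j)

theorem mem_span_of_mul_X_zero_mem {R : Type*} [CommRing R] [IsDomain R]
    {f : MvPolynomial (Fin 5) R}
    (hf : f * X 0 ∈ Ideal.span {X 0 * X 2 + X 3 ^ 2, X 0 * X 4 - X 1 * X 3,
      X 1 * X 2 + X 3 * X 4}) :
    f ∈ Ideal.span {X 0 * X 2 + X 3 ^ 2, X 0 * X 4 - X 1 * X 3, X 1 * X 2 + X 3 * X 4} := by
  simp only [Ideal.span, Submodule.mem_span_triple, smul_eq_mul] at hf ⊢
  obtain ⟨a, b, c, habc⟩ := hf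
  obtain ⟨a', ha'⟩ := X_dvd_sub_aeval_update_zero 0 a
  obtain ⟨b', hb'⟩ := X_dvd_sub_aeval_update_zero 0 b
  obtain ⟨c', hc'⟩ := X_dvd_sub_aeval_update_zero 0 c
  set φ : MvPolynomial (Fin 5) R →ₐ[R] MvPolynomial (Fin 5) R := aeval (Function.update X 0 0)
  have hsyz : φ a * X 3 ^ 2 - φ b * (X 1 * X 3) + φ c * (X 1 * X 2 + X 3 * X 4) = 0 := by
    have := congrArg φ habc
    simp only [φ, map_add, map_sub, map_mul, map_pow, aeval_X, Function.update_apply,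
      Fin.reduceEq, if_true, if_false] at this
    linear_combination this
  obtain ⟨p, q, ha, hb, hc⟩ := exists_eq_of_syzygy X_prime (by simp) (by simp) hsyz
  refine ⟨a', b', c' + p, mul_right_cancel₀ (X_ne_zero 0) ?_⟩
  linear_combination habc - (X 0 * X 2 + X 3 ^ 2) * (ha' + ha)
    - (X 0 * X 4 - X 1 * X 3) * (hb' + hb) - (X 1 * X 2 + X 3 * X 4) * (hc' + hc)

theorem colon_ideal_eq :
    (Ideal.span {(X 0 * X 2 + X 3 ^ 2 : MvPolynomial (Fin 5) ℂ),
        X 0 * X 4 - X 1 * X 3, X 1 * X 2 + X 3 * X 4}).colon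
      (Ideal.span {(X 0 : MvPolynomial (Fin 5) ℂ)}) =
    Ideal.span {(X 0 * X 2 + X 3 ^ 2 : MvPolynomial (Fin 5) ℂ),
        X 0 * X 4 - X 1 * X 3, X 1 * X 2 + X 3 * X 4} :=
  le_antisymm
    (fun _ hf ↦ mem_span_of_mul_X_zero_mem (Ideal.mem_colon_span_singleton.mp hf))
    Ideal.le_colon
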